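/- Let X be an ℝ-tree, A ⊆ X nonempty and convex, and consider a play of the Lion-Man game in A with speed D > 0 such that D_n > D for all n ∈ ℕ. Then L_n ∈ [L₀, L_{n+1}] for all n ∈ ℕ; consequently d(L₀,L_n) = nD for all n ∈ ℕ and ⋃_{n≥0}[L₀,L_n] is (the image of) a geodesic ray contained in A. -/
import Mathlib


open Set Filter Metric

section Defs

variable {X : Type*} [MetricSpace X]

/-- A unit-speed geodesic defined on `[a, b]`. -/
def IsGeodesicOn (γ : ℝ → X) (a b : ℝ) : Prop :=
  ∀ s ∈ Set.Icc a b, ∀ t ∈ Set.Icc a b, dist (γ s) (γ t) = |s - t|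

/-- `S` is a geodesic segment joining `x` and `y`. -/
def IsGeodesicSegment (S : Set X) (x y : X) : Prop :=
  ∃ (a b : ℝ) (γ : ℝ → X), a ≤ b ∧ IsGeodesicOn γ a b ∧ γ a = x ∧ γ b = y ∧
    S = γ '' Set.Icc a b

/-- A geodesic space: every two points are joined by a geodesic segment. -/
def GeodesicSpace (X : Type*) [MetricSpace X] : Prop :=
  ∀ x y : X, ∃ S : Set X, IsGeodesicSegment S x y

/-- A uniquely geodesic space. -/
def UniquelyGeodesic (X : Type*) [MetricSpace X] : Prop :=
  ∀ x y : X, ∃! S : Set X, IsGeodesicSegment S x y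

/-- `S` is contained in the closed `M`-neighborhood of `T`. -/
def InClosedNbhd (S T : Set X) (M : ℝ) : Prop :=
  ∀ p ∈ S, ∃ q ∈ T, dist p q ≤ M

/-- A triangle with sides `S1, S2, S3` is `M`-slim. -/
def SlimTriangle (S1 S2 S3 : Set X) (M : ℝ) : Prop :=
  InClosedNbhd S1 (S2 ∪ S3) M ∧ InClosedNbhd S2 (S1 ∪ S3) M ∧ InClosedNbhd S3 (S1 ∪ S2) M

/-- `X` is `δ`-hyperbolic: every geodesic triangle is `δ`-slim. -/
def DeltaHyperbolic (X : Type*) [MetricSpace X] (δ : ℝ) : Prop :=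
  ∀ x y z : X, ∀ S1 S2 S3 : Set X,
    IsGeodesicSegment S1 x y → IsGeodesicSegment S2 y z → IsGeodesicSegment S3 z x →
    SlimTriangle S1 S2 S3 δ

/-- A geodesic ray `γ : [0, ∞) → X`. -/
def IsGeodesicRay (γ : ℝ → X) : Prop :=
  ∀ s ∈ Set.Ici (0:ℝ), ∀ t ∈ Set.Ici (0:ℝ), dist (γ s) (γ t) = |s - t|

/-- A set is geodesically bounded if it contains no geodesic ray. -/
def GeodesicallyBounded (A : Set X) : Prop :=
  ¬ ∃ γ : ℝ → X, IsGeodesicRay γ ∧ ∀ t ∈ Set.Ici (0:ℝ), γ t ∈ A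

/-- A directional curve `γ : [0, ∞) → X` (with some constant `b ≥ 0`). -/
def IsDirectionalCurve (γ : ℝ → X) : Prop :=
  ∃ b : ℝ, 0 ≤ b ∧ ∀ s ∈ Set.Ici (0:ℝ), ∀ t ∈ Set.Ici (0:ℝ),
    |s - t| - b ≤ dist (γ s) (γ t) ∧ dist (γ s) (γ t) ≤ |s - t|

/-- A set is directionally bounded if it contains no directional curve. -/
def DirectionallyBounded (A : Set X) : Prop :=
  ¬ ∃ γ : ℝ → X, IsDirectionalCurve γ ∧ ∀ t ∈ Set.Ici (0:ℝ), γ t ∈ A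

/-- A subset of a geodesic space is convex if every geodesic segment joining two of its
points is contained in it. -/
def GeodesicConvex (A : Set X) : Prop :=
  ∀ x ∈ A, ∀ y ∈ A, ∀ S : Set X, IsGeodesicSegment S x y → S ⊆ A

/-- The comparison point in the Euclidean plane: the point on the segment from `x'` to `y'`
(of length `L`) at distance `t` from `x'`. -/
noncomputable def cmpPt (x' y' : EuclideanSpace ℝ (Fin 2)) (L t : ℝ) :
    EuclideanSpace ℝ (Fin 2) :=
  AffineMap.lineMap x' y' (t / L)

/-- `X` is a CAT(0) space: it is geodesic and for every geodesic triangle and every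
comparison triangle in the Euclidean plane, distances between points on the triangle are
bounded by the distances between the corresponding comparison points. -/
def CAT0Space (X : Type*) [MetricSpace X] : Prop :=
  GeodesicSpace X ∧
  ∀ (x y z : X) (γ1 γ2 γ3 : ℝ → X),
    IsGeodesicOn γ1 0 (dist x y) → γ1 0 = x → γ1 (dist x y) = y →
    IsGeodesicOn γ2 0 (dist y z) → γ2 0 = y → γ2 (dist y z) = z →
    IsGeodesicOn γ3 0 (dist z x) → γ3 0 = z → γ3 (dist z x) = x →
    ∀ x' y' z' : EuclideanSpace ℝ (Fin 2),
      dist x' y' = dist x y → dist y' z' = dist y z → dist z' x' = dist z x →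
      (∀ s ∈ Set.Icc (0:ℝ) (dist x y), ∀ t ∈ Set.Icc (0:ℝ) (dist y z),
        dist (γ1 s) (γ2 t) ≤ dist (cmpPt x' y' (dist x y) s) (cmpPt y' z' (dist y z) t)) ∧
      (∀ s ∈ Set.Icc (0:ℝ) (dist y z), ∀ t ∈ Set.Icc (0:ℝ) (dist z x),
        dist (γ2 s) (γ3 t) ≤ dist (cmpPt y' z' (dist y z) s) (cmpPt z' x' (dist z x) t)) ∧
      (∀ s ∈ Set.Icc (0:ℝ) (dist z x), ∀ t ∈ Set.Icc (0:ℝ) (dist x y),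
        dist (γ3 s) (γ1 t) ≤ dist (cmpPt z' x' (dist z x) s) (cmpPt x' y' (dist x y) t))

/-- Busemann convexity. -/
def BusemannConvex (X : Type*) [MetricSpace X] : Prop :=
  GeodesicSpace X ∧
  ∀ (a b c d : ℝ) (γ σ : ℝ → X), a ≤ b → c ≤ d →
    IsGeodesicOn γ a b → IsGeodesicOn σ c d →
    ∀ t ∈ Set.Icc (0:ℝ) 1,
      dist (γ ((1-t)*a + t*b)) (σ ((1-t)*c + t*d)) ≤
        (1-t) * dist (γ a) (σ c) + t * dist (γ b) (σ d)

/-- A `(lam, eps)`-quasi-geodesic defined on `[a, b]`. -/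
def IsQuasiGeodesicOn (lam eps : ℝ) (γ : ℝ → X) (a b : ℝ) : Prop :=
  ∀ s ∈ Set.Icc a b, ∀ t ∈ Set.Icc a b,
    (1/lam) * |s - t| - eps ≤ dist (γ s) (γ t) ∧ dist (γ s) (γ t) ≤ lam * |s - t| + eps

/-- A `(lam, eps)`-quasi-geodesic ray. -/
def IsQuasiGeodesicRay (lam eps : ℝ) (γ : ℝ → X) : Prop :=
  ∀ s ∈ Set.Ici (0:ℝ), ∀ t ∈ Set.Ici (0:ℝ),
    (1/lam) * |s - t| - eps ≤ dist (γ s) (γ t) ∧ dist (γ s) (γ t) ≤ lam * |s - t| + eps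

/-- A `k`-local `lam`-quasi-geodesic ray: a `(lam, eps)`-quasi-geodesic ray locally,
for every `eps > 0`. -/
def IsLocalQuasiGeodesicRay (k lam : ℝ) (γ : ℝ → X) : Prop :=
  ∀ eps > (0:ℝ), ∀ s ∈ Set.Ici (0:ℝ), ∀ t ∈ Set.Ici (0:ℝ), |s - t| ≤ k →
    (1/lam) * |s - t| - eps ≤ dist (γ s) (γ t) ∧ dist (γ s) (γ t) ≤ lam * |s - t| + eps

/-- `S` is the image of a `lam`-quasi-geodesic joining `x` and `y`
(i.e. a `(lam, eps)`-quasi-geodesic for every `eps > 0`). -/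
def IsQuasiGeodesicSegment (lam : ℝ) (S : Set X) (x y : X) : Prop :=
  ∃ (a b : ℝ) (γ : ℝ → X), a ≤ b ∧ (∀ eps > (0:ℝ), IsQuasiGeodesicOn lam eps γ a b) ∧
    γ a = x ∧ γ b = y ∧ S = γ '' Set.Icc a b

/-- Every `lam`-quasi-geodesic triangle in `X` is `M`-slim. -/
def QuasiGeodesicTrianglesSlim (X : Type*) [MetricSpace X] (lam M : ℝ) : Prop :=
  ∀ x y z : X, ∀ S1 S2 S3 : Set X,
    IsQuasiGeodesicSegment lam S1 x y → IsQuasiGeodesicSegment lam S2 y z →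
    IsQuasiGeodesicSegment lam S3 z x → SlimTriangle S1 S2 S3 M

/-- A play of the Lion-Man game in `A` with speed `D`. -/
def IsLionManPlay (A : Set X) (D : ℝ) (L M : ℕ → X) : Prop :=
  (∀ n, L n ∈ A) ∧ (∀ n, M n ∈ A) ∧
  (∀ n, ∃ S : Set X, IsGeodesicSegment S (L n) (M n) ∧ L (n+1) ∈ S) ∧
  (∀ n, dist (L n) (L (n+1)) = min D (dist (L n) (M n))) ∧
  (∀ n, dist (M n) (M (n+1)) ≤ D)

/-- The lion wins a play if `d(L_{n+1}, M_n) → 0`. -/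
def LionWins (L M : ℕ → X) : Prop :=
  Filter.Tendsto (fun n => dist (L (n+1)) (M n)) Filter.atTop (nhds 0)

/-- The lion always wins the Lion-Man game played in `A`. -/
def LionAlwaysWins (A : Set X) : Prop :=
  ∀ D > (0:ℝ), ∀ L M : ℕ → X, IsLionManPlay A D L M → LionWins L M

end Defs

/-- An `ℝ`-tree: a uniquely geodesic space such that whenever `[y,x] ∩ [x,z] = {x}`, one
has `[y,x] ∪ [x,z] = [y,z]`. -/
def IsRTree (X : Type*) [MetricSpace X] : Prop :=
  UniquelyGeodesic X ∧
  ∀ x y z : X, ∀ Syx Sxz Syz : Set X,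
    IsGeodesicSegment Syx y x → IsGeodesicSegment Sxz x z → IsGeodesicSegment Syz y z →
    Syx ∩ Sxz = {x} → Syx ∪ Sxz = Syz


section AuxLemmas

variable {X : Type*} [MetricSpace X]

lemma seg_left_mem {S : Set X} {x y : X} (h : IsGeodesicSegment S x y) : x ∈ S := by
  obtain ⟨a, b, γ, hab, hgeo, hga, hgb, rfl⟩ := h
  exact ⟨a, ⟨le_refl a, hab⟩, hga⟩

lemma seg_right_mem {S : Set X} {x y : X} (h : IsGeodesicSegment S x y) : y ∈ S := by
  obtain ⟨a, b, γ, hab, hgeo, hga, hgb, rfl⟩ := h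
  exact ⟨b, ⟨hab, le_refl b⟩, hgb⟩

lemma seg_dist_add {S : Set X} {x y : X} (h : IsGeodesicSegment S x y) {p : X}
    (hp : p ∈ S) : dist x p + dist p y = dist x y := by
  obtain ⟨a, b, γ, hab, hgeo, hga, hgb, rfl⟩ := h
  obtain ⟨s, hs, rfl⟩ := hp
  have h1 : dist x (γ s) = s - a := by
    rw [← hga]
    rw [hgeo a ⟨le_refl a, hab⟩ s hs, abs_of_nonpos (by linarith [hs.1])]
    ring
  have h2 : dist (γ s) y = b - s := by
    rw [← hgb, hgeo s hs b ⟨hab, le_refl b⟩, abs_of_nonpos (by linarith [hs.2])]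
    ring
  have h3 : dist x y = b - a := by
    rw [← hga, ← hgb, hgeo a ⟨le_refl a, hab⟩ b ⟨hab, le_refl b⟩,
      abs_of_nonpos (by linarith)]
    ring
  rw [h1, h2, h3]; ring

lemma seg_dist_abs {S : Set X} {x y : X} (h : IsGeodesicSegment S x y) {p q : X}
    (hp : p ∈ S) (hq : q ∈ S) : dist p q = |dist x p - dist x q| := by
  obtain ⟨a, b, γ, hab, hgeo, hga, hgb, rfl⟩ := h
  obtain ⟨s, hs, rfl⟩ := hp
  obtain ⟨t, ht, rfl⟩ := hq
  have h1 : dist x (γ s) = s - a := by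
    rw [← hga, hgeo a ⟨le_refl a, hab⟩ s hs, abs_of_nonpos (by linarith [hs.1])]; ring
  have h2 : dist x (γ t) = t - a := by
    rw [← hga, hgeo a ⟨le_refl a, hab⟩ t ht, abs_of_nonpos (by linarith [ht.1])]; ring
  rw [h1, h2, hgeo s hs t ht]
  congr 1; ring

lemma seg_symm {S : Set X} {x y : X} (h : IsGeodesicSegment S x y) :
    IsGeodesicSegment S y x := by
  obtain ⟨a, b, γ, hab, hgeo, hga, hgb, rfl⟩ := h
  refine ⟨a, b, fun t => γ (a + b - t), hab, ?_, by simpa using hgb, by simpa using hga, ?_⟩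
  · intro s hs t ht
    rw [hgeo (a + b - s) ⟨by linarith [hs.2], by linarith [hs.1]⟩
      (a + b - t) ⟨by linarith [ht.2], by linarith [ht.1]⟩]
    rw [show a + b - s - (a + b - t) = -(s - t) by ring, abs_neg]
  · ext p
    constructor
    · rintro ⟨s, hs, rfl⟩
      exact ⟨a + b - s, ⟨by linarith [hs.2], by linarith [hs.1]⟩,
        by show γ (a + b - (a + b - s)) = γ s; congr 1; ring⟩
    · rintro ⟨s, hs, rfl⟩
      exact ⟨a + b - s, ⟨by linarith [hs.2], by linarith [hs.1]⟩, rfl⟩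

/-- Lemma C: if distances add, then `y` lies on every geodesic from `x` to `z`,
and that geodesic splits as a union. -/
lemma tree_split (hX : IsRTree X) {x y z : X}
    (hadd : dist x y + dist y z = dist x z) {S : Set X}
    (hS : IsGeodesicSegment S x z) :
    ∃ S1 S2 : Set X, IsGeodesicSegment S1 x y ∧ IsGeodesicSegment S2 y z ∧ S = S1 ∪ S2 := by
  obtain ⟨S1, hS1⟩ := (hX.1 x y).exists
  obtain ⟨S2, hS2⟩ := (hX.1 y z).exists
  have hint : S1 ∩ S2 = {y} := by
    ext p
    constructor
    · rintro ⟨hp1, hp2⟩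
      have e1 := seg_dist_add hS1 hp1
      have e2 := seg_dist_add hS2 hp2
      have tri : dist x z ≤ dist x p + dist p z := dist_triangle x p z
      have hpy : dist p y ≤ 0 := by
        have := dist_comm p y
        linarith [dist_comm y p]
      have : p = y := by
        rw [← dist_le_zero]; exact hpy
      simpa using this
    · rintro rfl
      exact ⟨seg_right_mem hS1, seg_left_mem hS2⟩
  have := hX.2 y x z S1 S2 S hS1 hS2 hS hint
  exact ⟨S1, S2, hS1, hS2, this.symm⟩

lemma tree_mem_of_add (hX : IsRTree X) {x y z : X}
    (hadd : dist x y + dist y z = dist x z) {S : Set X}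
    (hS : IsGeodesicSegment S x z) : y ∈ S := by
  obtain ⟨S1, S2, hS1, hS2, rfl⟩ := tree_split hX hadd hS
  exact Or.inl (seg_right_mem hS1)

/-- Lemma D: additivity propagates. -/
lemma treeD (hX : IsRTree X) {x w y z : X}
    (Hw : dist x w + dist w y = dist x y)
    (Hyz : dist w y + dist y z = dist w z)
    (hle : dist y z ≤ dist w y) :
    dist x y + dist y z = dist x z := by
  obtain ⟨S1, hS1⟩ := (hX.1 x y).exists
  obtain ⟨S2, hS2⟩ := (hX.1 y z).exists
  by_cases hint : S1 ∩ S2 = {y}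
  · obtain ⟨U, hU⟩ := (hX.1 x z).exists
    have hunion := hX.2 y x z S1 S2 U hS1 hS2 hU hint
    have hyU : y ∈ U := by rw [← hunion]; exact Or.inl (seg_right_mem hS1)
    exact seg_dist_add hU hyU
  · exfalso
    have hy : y ∈ S1 ∩ S2 := ⟨seg_right_mem hS1, seg_left_mem hS2⟩
    have : ∃ p ∈ S1 ∩ S2, p ≠ y := by
      by_contra hcon
      push_neg at hcon
      apply hint
      ext p
      exact ⟨fun hp => hcon p hp, fun hp => by rw [Set.mem_singleton_iff] at hp; rw [hp]; exact hy⟩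
    obtain ⟨p, ⟨hp1, hp2⟩, hpy⟩ := this
    have hwS1 : w ∈ S1 := tree_mem_of_add hX Hw hS1
    have e1 : dist x p + dist p y = dist x y := seg_dist_add hS1 hp1
    have e2 : dist y p + dist p z = dist y z := seg_dist_add hS2 hp2
    have e3 : dist p w = |dist x p - dist x w| := seg_dist_abs hS1 hp1 hwS1
    have hpyle : dist p y ≤ dist w y := by
      linarith [dist_nonneg (x := p) (y := z), dist_comm y p]
    have e4 : dist p w = dist w y - dist p y := by
      rw [e3, abs_of_nonneg (by linarith)]
      linarith
    have tri : dist w z ≤ dist w p + dist p z := dist_triangle w p z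
    have hpy0 : dist p y ≤ 0 := by
      rw [dist_comm w p] at tri
      linarith [dist_comm y p]
    exact hpy (dist_le_zero.mp hpy0)

/-- Lemma E: one step of the lion's path is additive. -/
lemma treeE (hX : IsRTree X) {x y w m z : X}
    (Hxyw : dist x y + dist y w = dist x w)
    (hyw : 0 < dist y w)
    {S2 : Set X} (hS2 : IsGeodesicSegment S2 y m) (hz : z ∈ S2)
    (hwm : dist w m < dist y w + dist y m) :
    dist x y + dist y z = dist x z := by
  obtain ⟨S1, hS1⟩ := (hX.1 x y).exists
  have hz2 : dist y z + dist z m = dist y m := seg_dist_add hS2 hz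
  by_cases hint : S1 ∩ S2 = {y}
  · obtain ⟨U, hU⟩ := (hX.1 x m).exists
    have hunion := hX.2 y x m S1 S2 U hS1 hS2 hU hint
    have hyU : y ∈ U := by rw [← hunion]; exact Or.inl (seg_right_mem hS1)
    have hzU : z ∈ U := by rw [← hunion]; exact Or.inr hz
    have e1 := seg_dist_add hU hyU
    have e2 := seg_dist_add hU hzU
    linarith
  · exfalso
    have hy : y ∈ S1 ∩ S2 := ⟨seg_right_mem hS1, seg_left_mem hS2⟩
    have : ∃ p ∈ S1 ∩ S2, p ≠ y := by
      by_contra hcon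
      push_neg at hcon
      apply hint
      ext p
      exact ⟨fun hp => hcon p hp, fun hp => by rw [Set.mem_singleton_iff] at hp; rw [hp]; exact hy⟩
    obtain ⟨p, ⟨hp1, hp2⟩, hpy⟩ := this
    obtain ⟨S', hS'⟩ := (hX.1 w y).exists
    have hintwy : S' ∩ S2 = {y} := by
      ext q
      constructor
      · rintro ⟨hq1, hq2⟩
        by_contra hqy
        rw [Set.mem_singleton_iff] at hqy
        have eq1 : dist x p + dist p y = dist x y := seg_dist_add hS1 hp1
        have eq2 : dist w q + dist q y = dist w y := seg_dist_add hS' hq1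
        have eq3 : dist p q = |dist y p - dist y q| := seg_dist_abs hS2 hp2 hq2
        have t1 : dist x q ≥ dist x w - dist w q := by
          linarith [dist_triangle x q w, dist_comm q w]
        have t2 : dist p q ≥ dist x q - dist x p := by
          linarith [dist_triangle x p q]
        have hge : dist p q ≥ dist p y + dist q y := by
          linarith [dist_comm y w]
        have hp0 : 0 < dist y p := by
          rw [dist_pos]; intro h; exact hpy h.symm
        have hq0 : 0 < dist y q := by
          rw [dist_pos]; intro h; exact hqy h.symm
        rcases abs_cases (dist y p - dist y q) with ⟨habs, _⟩ | ⟨habs, _⟩ <;>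
          rw [habs] at eq3 <;>
          [linarith [dist_comm y q, dist_comm y p]; linarith [dist_comm y q, dist_comm y p]]
      · rintro rfl
        exact ⟨seg_right_mem hS', seg_left_mem hS2⟩
    obtain ⟨V, hV⟩ := (hX.1 w m).exists
    have hunion := hX.2 y w m S' S2 V hS' hS2 hV hintwy
    have hyV : y ∈ V := by rw [← hunion]; exact Or.inl (seg_right_mem hS')
    have := seg_dist_add hV hyV
    rw [dist_comm w y] at this
    linarith [dist_comm y w]

/-- Unit-speed parametrization of a geodesic segment starting from `x`. -/
lemma seg_param {S : Set X} {x y : X} (h : IsGeodesicSegment S x y) :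
    ∃ g : ℝ → X, IsGeodesicOn g 0 (dist x y) ∧ g 0 = x ∧ g (dist x y) = y ∧
      g '' Set.Icc 0 (dist x y) = S := by
  obtain ⟨a, b, γ, hab, hgeo, hga, hgb, rfl⟩ := h
  have hd : dist x y = b - a := by
    rw [← hga, ← hgb, hgeo a ⟨le_refl a, hab⟩ b ⟨hab, le_refl b⟩,
      abs_of_nonpos (by linarith)]
    ring
  refine ⟨fun t => γ (a + t), ?_, by simpa using hga, ?_, ?_⟩
  · intro s hs t ht
    rw [hd] at hs ht
    rw [hgeo (a + s) ⟨by linarith [hs.1], by linarith [hs.2]⟩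
      (a + t) ⟨by linarith [ht.1], by linarith [ht.2]⟩]
    congr 1; ring
  · show γ (a + dist x y) = y
    rw [hd, show a + (b - a) = b by ring, hgb]
  · ext p
    constructor
    · rintro ⟨s, hs, rfl⟩
      rw [hd] at hs
      exact ⟨a + s, ⟨by linarith [hs.1], by linarith [hs.2]⟩, rfl⟩
    · rintro ⟨s, hs, rfl⟩
      exact ⟨s - a, by rw [hd]; exact ⟨by linarith [hs.1], by linarith [hs.2]⟩,
        by show γ (a + (s - a)) = γ s; congr 1; ring⟩

end AuxLemmas

/-- In a play of the Lion-Man game in a nonempty convex subset of an `ℝ`-tree with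
`D_n > D` for all `n`: `L_n ∈ [L₀, L_{n+1}]` for all `n`; consequently
`d(L₀, L_n) = nD` for all `n` and `⋃_{n≥0} [L₀, L_n]` is the image of a geodesic ray
contained in `A`. -/
theorem stmt16 {X : Type*} [MetricSpace X] (hX : IsRTree X)
    (A : Set X) (hA : A.Nonempty) (hconv : GeodesicConvex A)
    (D : ℝ) (hD : 0 < D) (L M : ℕ → X) (hplay : IsLionManPlay A D L M)
    (hfar : ∀ n, dist (L n) (M n) > D) :
    (∀ n : ℕ, ∀ S : Set X, IsGeodesicSegment S (L 0) (L (n + 1)) → L n ∈ S) ∧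
    (∀ n : ℕ, dist (L 0) (L n) = (n : ℝ) * D) ∧
    ∃ γ : ℝ → X, IsGeodesicRay γ ∧ (∀ t ∈ Set.Ici (0:ℝ), γ t ∈ A) ∧
      γ '' Set.Ici (0:ℝ) =
        {p | ∃ (n : ℕ) (S : Set X), IsGeodesicSegment S (L 0) (L n) ∧ p ∈ S} := by
  obtain ⟨hLA, hMA, hseg, hstep, hM⟩ := hplay
  have hUG := hX.1
  have hstepD : ∀ n, dist (L n) (L (n+1)) = D := fun n => by
    rw [hstep n, min_eq_left (le_of_lt (hfar n))]
  have hlocal : ∀ n, dist (L n) (L (n+1)) + dist (L (n+1)) (L (n+2)) =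
      dist (L n) (L (n+2)) := by
    intro n
    obtain ⟨S, hS, hmem⟩ := hseg n
    obtain ⟨S', hS', hmem'⟩ := hseg (n+1)
    have Hxyw : dist (L n) (L (n+1)) + dist (L (n+1)) (M n) = dist (L n) (M n) :=
      seg_dist_add hS hmem
    have hyw : 0 < dist (L (n+1)) (M n) := by
      have := hstepD n; linarith [hfar n]
    have hwm : dist (M n) (M (n+1)) <
        dist (L (n+1)) (M n) + dist (L (n+1)) (M (n+1)) := by
      linarith [hM n, hfar (n+1)]
    exact treeE hX Hxyw hyw hS' hmem' hwm
  have hAdd : ∀ n, dist (L 0) (L n) + dist (L n) (L (n+1)) = dist (L 0) (L (n+1)) := by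
    intro n
    induction n with
    | zero => simp
    | succ k ih =>
      exact treeD hX ih (hlocal k) (le_of_eq (by rw [hstepD k, hstepD (k+1)]))
  have hdist : ∀ n, dist (L 0) (L n) = (n : ℝ) * D := by
    intro n
    induction n with
    | zero => simp
    | succ k ih =>
      have h := hAdd k
      rw [ih, hstepD k] at h
      push_cast
      linarith
  have upper : ∀ a k : ℕ, dist (L a) (L (a+k)) ≤ (k : ℝ) * D := by
    intro a k
    induction k with
    | zero => simp
    | succ j ih =>
      have tri : dist (L a) (L (a+j+1)) ≤ dist (L a) (L (a+j)) + dist (L (a+j)) (L (a+j+1)) :=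
        dist_triangle _ _ _
      rw [hstepD (a+j)] at tri
      push_cast
      calc dist (L a) (L (a + (j+1))) = dist (L a) (L (a+j+1)) := by ring_nf
        _ ≤ (j:ℝ) * D + D := by linarith
        _ = ((j:ℝ) + 1) * D := by ring
  have hLdist : ∀ a b : ℕ, a ≤ b → dist (L a) (L b) = ((b:ℝ) - (a:ℝ)) * D := by
    intro a b hab
    obtain ⟨k, rfl⟩ := Nat.exists_eq_add_of_le hab
    have h1 : dist (L a) (L (a+k)) ≤ (k:ℝ) * D := upper a k
    have h2 : dist (L 0) (L (a+k)) ≤ dist (L 0) (L a) + dist (L a) (L (a+k)) :=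
      dist_triangle _ _ _
    rw [hdist (a+k), hdist a] at h2
    push_cast at h2 ⊢
    linarith
  -- construct unit-speed geodesics on each step
  have hgs : ∀ n : ℕ, ∃ g : ℝ → X, IsGeodesicOn g 0 D ∧ g 0 = L n ∧ g D = L (n+1) ∧
      ∀ t ∈ Set.Icc (0:ℝ) D, g t ∈ A := by
    intro n
    obtain ⟨S, hS⟩ := (hUG (L n) (L (n+1))).exists
    obtain ⟨g, hgeo, hg0, hgD, hgim⟩ := seg_param hS
    rw [hstepD n] at hgeo hgD hgim
    refine ⟨g, hgeo, hg0, hgD, fun t ht => ?_⟩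
    exact hconv _ (hLA n) _ (hLA (n+1)) S hS (hgim ▸ ⟨t, ht, rfl⟩)
  choose g hgeo hg0 hgD' hgA using hgs
  set γ : ℝ → X := fun t => g ⌊t / D⌋₊ (t - (⌊t / D⌋₊ : ℝ) * D) with hγdef
  have hγ : ∀ t : ℝ, γ t = g ⌊t / D⌋₊ (t - (⌊t / D⌋₊ : ℝ) * D) := fun t => rfl
  have hfl : ∀ t : ℝ, 0 ≤ t → (⌊t / D⌋₊ : ℝ) * D ≤ t ∧ t < ((⌊t / D⌋₊ : ℝ) + 1) * D := by
    intro t ht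
    constructor
    · have := Nat.floor_le (div_nonneg ht hD.le)
      calc (⌊t / D⌋₊ : ℝ) * D ≤ (t / D) * D := by nlinarith
        _ = t := by field_simp
    · have := Nat.lt_floor_add_one (t / D)
      have h2 : t / D * D < ((⌊t / D⌋₊ : ℝ) + 1) * D := by nlinarith
      rwa [div_mul_cancel₀ _ hD.ne'] at h2
  have hfloor_nd : ∀ n : ℕ, ⌊((n:ℝ) * D) / D⌋₊ = n := by
    intro n
    rw [mul_div_assoc, div_self hD.ne', mul_one, Nat.floor_natCast]
  have hγn : ∀ n : ℕ, γ ((n:ℝ) * D) = L n := by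
    intro n
    rw [hγ, hfloor_nd n, sub_self, hg0]
  have key : ∀ s t : ℝ, 0 ≤ s → s ≤ t → dist (γ s) (γ t) = t - s := by
    intro s t hs hst
    have ht : 0 ≤ t := le_trans hs hst
    set m := ⌊s / D⌋₊ with hm
    set n := ⌊t / D⌋₊ with hn
    obtain ⟨hm1, hm2⟩ := hfl s hs
    obtain ⟨hn1, hn2⟩ := hfl t ht
    have hmn : m ≤ n := Nat.floor_le_floor (by gcongr)
    have hs' : s - (m:ℝ) * D ∈ Set.Icc (0:ℝ) D := ⟨by linarith, by linarith⟩
    have ht' : t - (n:ℝ) * D ∈ Set.Icc (0:ℝ) D := ⟨by linarith, by linarith⟩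
    rcases eq_or_lt_of_le hmn with heq | hlt
    · rw [hγ s, hγ t, ← hm, ← hn, ← heq]
      rw [hgeo m _ hs' _ (heq ▸ ht')]
      rw [abs_of_nonpos (by linarith)]
      ring
    · have hmn1 : (m:ℝ) + 1 ≤ (n:ℝ) := by exact_mod_cast hlt
      have e1 : dist (γ s) (L (m+1)) = D - (s - (m:ℝ) * D) := by
        rw [hγ s, ← hm, ← hgD' m, hgeo m _ hs' D ⟨hD.le, le_refl D⟩]
        rw [abs_of_nonpos (by linarith [hs'.2])]
        ring
      have e2 : dist (L n) (γ t) = t - (n:ℝ) * D := by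
        rw [hγ t, ← hn, ← hg0 n, hgeo n 0 ⟨le_refl 0, hD.le⟩ _ ht']
        rw [abs_of_nonpos (by linarith [ht'.1])]
        ring
      have e3 : dist (L (m+1)) (L n) = ((n:ℝ) - ((m:ℝ)+1)) * D := by
        rw [hLdist (m+1) n hlt]
        push_cast
        ring
      have e4 : dist (L m) (L (n+1)) = ((n:ℝ) + 1 - (m:ℝ)) * D := by
        rw [hLdist m (n+1) (by omega)]
        push_cast
        ring
      have e5 : dist (L m) (γ s) = s - (m:ℝ) * D := by
        rw [hγ s, ← hm, ← hg0 m, hgeo m 0 ⟨le_refl 0, hD.le⟩ _ hs']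
        rw [abs_of_nonpos (by linarith [hs'.1])]
        ring
      have e6 : dist (γ t) (L (n+1)) = D - (t - (n:ℝ) * D) := by
        rw [hγ t, ← hn, ← hgD' n, hgeo n _ ht' D ⟨hD.le, le_refl D⟩]
        rw [abs_of_nonpos (by linarith [ht'.2])]
        ring
      have hub : dist (γ s) (γ t) ≤ t - s := by
        calc dist (γ s) (γ t) ≤ dist (γ s) (L (m+1)) + dist (L (m+1)) (L n) + dist (L n) (γ t) :=
          dist_triangle4 _ _ _ _
        _ = t - s := by rw [e1, e2, e3]; ring
      have hlb : dist (L m) (L (n+1)) ≤ dist (L m) (γ s) + dist (γ s) (γ t) + dist (γ t) (L (n+1)) :=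
        dist_triangle4 _ _ _ _
      rw [e4, e5, e6] at hlb
      linarith
  have hray : IsGeodesicRay γ := by
    intro s hs t ht
    rcases le_total s t with h | h
    · rw [key s t hs h, abs_of_nonpos (by linarith)]
      ring
    · rw [dist_comm, key t s ht h, abs_of_nonneg (by linarith)]
  have hsegm : ∀ n : ℕ, IsGeodesicSegment (γ '' Set.Icc 0 ((n:ℝ) * D)) (L 0) (L n) := by
    intro n
    have hnD : (0:ℝ) ≤ (n:ℝ) * D := by positivity
    refine ⟨0, (n:ℝ) * D, γ, hnD, ?_, ?_, hγn n, rfl⟩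
    · intro a ha b hb
      exact hray a ha.1 b hb.1
    · have := hγn 0
      simpa using this
  refine ⟨fun n S hS => tree_mem_of_add hX (hAdd n) hS, hdist, γ, hray, ?_, ?_⟩
  · intro t ht
    rw [hγ t]
    exact hgA _ _ ⟨by linarith [(hfl t ht).1], by linarith [(hfl t ht).2]⟩
  · ext p
    constructor
    · rintro ⟨t, ht, rfl⟩
      refine ⟨⌊t / D⌋₊ + 1, γ '' Set.Icc 0 (((⌊t / D⌋₊ : ℕ) + 1 : ℕ) * D), hsegm _, ?_⟩
      refine ⟨t, ⟨ht, ?_⟩, rfl⟩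
      push_cast
      linarith [(hfl t ht).2]
    · rintro ⟨n, S, hS, hp⟩
      have hSeq : S = γ '' Set.Icc 0 ((n:ℝ) * D) := (hUG (L 0) (L n)).unique hS (hsegm n)
      rw [hSeq] at hp
      obtain ⟨u, hu, rfl⟩ := hp
      exact ⟨u, hu.1, rfl⟩
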